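/- Let Λ be the Lobachevsky function, and for n ≥ 5 set θ_n = π/2 − arccos(1/(2·cos(π/n))) and vol(L(n)) = (n/2)·(2Λ(θ_n) + Λ(θ_n + π/n) + Λ(θ_n − π/n) − Λ(2θ_n − π/2)). Then for every fixed natural number k ≥ 1, the sequence n ↦ (k·vol(L(n)))/(2n·(k+1)) converges to (k/(k+1))·(5/4)·Λ(π/6) as n → ∞; that is, the normalized volume of the tower L_k(n) of k Löbell polyhedra, which has volume k·vol(L(n)) and 2n(k+1) vertices, tends to (k/(k+1))·(5/8)·v_tet. -/

import Mathlib

open Real Filter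

/-- The Lobachevsky function `Λ(θ) = −∫₀^θ log|2 sin t| dt`. -/
noncomputable def lobachevsky (θ : ℝ) : ℝ :=
  -∫ t in (0:ℝ)..θ, Real.log |2 * Real.sin t|

/-- The angle parameter `θ_n = π/2 − arccos(1/(2cos(π/n)))` of the Löbell
polyhedron `L(n)`. -/
noncomputable def lobellAngle (n : ℕ) : ℝ :=
  π / 2 - Real.arccos (1 / (2 * Real.cos (π / (n : ℝ))))

/-- The volume of the right-angled hyperbolic Löbell polyhedron `L(n)`,
formula (5) of the paper. -/
noncomputable def lobellVolume (n : ℕ) : ℝ :=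
  ((n : ℝ) / 2) * (2 * lobachevsky (lobellAngle n)
    + lobachevsky (lobellAngle n + π / (n : ℝ))
    + lobachevsky (lobellAngle n - π / (n : ℝ))
    - lobachevsky (2 * lobellAngle n - π / 2))

/-!
The angle `θ_n` tends to `π / 6` and `π / n` to `0`. The integrand `log |2 sin t|` of `Λ` is the
logarithm of an analytic function, hence locally integrable, so `Λ` is continuous; it is odd
because the integrand is even. Hence the bracket in `vol(L(n))` tends to
`2Λ(π/6) + Λ(π/6) + Λ(π/6) - Λ(-π/6) = 5Λ(π/6)`, and the normalized tower volume, which is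
`k / (k + 1) · vol(L(n)) / (2n)`, tends to `k / (k + 1) · 5/4 · Λ(π/6)`.
-/

open Topology MeasureTheory

theorem intervalIntegrable_log_abs_two_mul_sin (a b : ℝ) :
    IntervalIntegrable (fun t => log |2 * sin t|) volume a b := by
  have h : AnalyticOnNhd ℝ (fun t => 2 * sin t) (Set.uIcc a b) := fun x _ => by fun_prop
  exact h.meromorphicOn.intervalIntegrable_log_norm

@[fun_prop]
theorem continuous_lobachevsky : Continuous lobachevsky :=
  (intervalIntegral.continuous_primitive intervalIntegrable_log_abs_two_mul_sin 0).neg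

theorem lobachevsky_neg (θ : ℝ) : lobachevsky (-θ) = -lobachevsky θ := by
  have hodd :
      ∫ t in (0 : ℝ)..-θ, log |2 * sin t| = -∫ t in (0 : ℝ)..θ, log |2 * sin t| := by
    rw [intervalIntegral.integral_symm, neg_inj]
    simpa using
      (intervalIntegral.integral_comp_neg (a := 0) (b := θ) fun t => log |2 * sin t|).symm
  simp only [lobachevsky, hodd]

theorem Real.arccos_one_half : arccos (1 / 2) = π / 3 := by
  rw [← cos_pi_div_three, arccos_cos (by positivity) (by linarith [pi_pos])]

theorem tendsto_lobellAngle : Tendsto lobellAngle atTop (𝓝 (π / 6)) := by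
  have hcont : ContinuousAt (fun x => π / 2 - arccos (1 / (2 * cos x))) 0 := by
    fun_prop (disch := simp)
  have hval : π / 2 - arccos (1 / (2 * cos 0)) = π / 6 := by
    rw [cos_zero, mul_one, arccos_one_half]
    ring
  rw [← hval]
  exact hcont.tendsto.comp (tendsto_const_div_atTop_nhds_zero_nat π)

theorem tendsto_lobellVolume_div_self :
    Tendsto (fun n : ℕ => lobellVolume n / n) atTop (𝓝 (5 / 2 * lobachevsky (π / 6))) := by
  set F : ℝ × ℝ → ℝ := fun p => (2 * lobachevsky p.1 + lobachevsky (p.1 + p.2)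
    + lobachevsky (p.1 - p.2) - lobachevsky (2 * p.1 - π / 2)) / 2
  have hF : Continuous F := by fun_prop
  have hval : F (π / 6, 0) = 5 / 2 * lobachevsky (π / 6) := by
    have hangle : 2 * (π / 6) - π / 2 = -(π / 6) := by ring
    simp only [F, add_zero, sub_zero, hangle, lobachevsky_neg]
    ring
  have hvol : ∀ᶠ n : ℕ in atTop, F (lobellAngle n, π / n) = lobellVolume n / n := by
    filter_upwards [eventually_ne_atTop 0] with n hn
    simp only [F, lobellVolume]
    field_simp
  rw [← hval]
  exact ((hF.tendsto _).comp
    (tendsto_lobellAngle.prodMk_nhds (tendsto_const_div_atTop_nhds_zero_nat π))).congr' hvol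

theorem lobell_tower_normalized_volume_tendsto_general (k : ℕ) :
    Tendsto (fun n : ℕ =>
        ((k : ℝ) * lobellVolume n) / (2 * (n : ℝ) * ((k : ℝ) + 1)))
      atTop
      (nhds (((k : ℝ) / ((k : ℝ) + 1)) * (5 / 4) * lobachevsky (π / 6))) := by
  convert tendsto_lobellVolume_div_self.const_mul ((k : ℝ) / (k + 1) / 2) using 1
  · funext n
    rcases eq_or_ne (n : ℝ) 0 with hn | hn
    · simp [hn]
    · field_simp
  · congr 1
    ring

/-- Formula (6): for fixed `k ≥ 1`, the normalized volume of the tower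
`L_k(n)` (volume `k·vol(L(n))`, `2n(k+1)` vertices) tends to
`(k/(k+1))·(5/8)·v_tet = (k/(k+1))·(5/4)·Λ(π/6)` as `n → ∞`. -/
theorem lobell_tower_normalized_volume_tendsto (k : ℕ) (hk : 1 ≤ k) :
    Tendsto (fun n : ℕ =>
        ((k : ℝ) * lobellVolume n) / (2 * (n : ℝ) * ((k : ℝ) + 1)))
      atTop
      (nhds (((k : ℝ) / ((k : ℝ) + 1)) * (5 / 4) * lobachevsky (π / 6))) :=
  lobell_tower_normalized_volume_tendsto_general k
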